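/- arXiv:1710.05316 — 6 statements merged into one kernel-verified Lean document; each statement's English description precedes it below -/
import Mathlib

section
/- In the ring ℤ[x]/(x^{2n+1}) with η the image of x and η̄ its 'conjugate' satisfying (1+η)(1+η̄)=1, one has η^{2n} = (η+η̄)^n. -/
open Polynomial

/-- In `ℤ[x]/(x^{2n+1})` with `η` the image of `X` and `η̄` its conjugate
(satisfying `(1+η)(1+η̄) = 1`), one has `η^{2n} = (η+η̄)^n`. -/
theorem stmt_2 (n : ℕ) (hn : 1 ≤ n)
    (η ηb : Polynomial ℤ ⧸ Ideal.span {(X : Polynomial ℤ) ^ (2 * n + 1)})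
    (hη : η = Ideal.Quotient.mk _ X)
    (h : (1 + η) * (1 + ηb) = 1) :
    η ^ (2 * n) = (η + ηb) ^ n := by
  set c := -(1 + ηb) with hcdef
  have hz : η ^ (2 * n + 1) = 0 := by
    rw [hη, ← map_pow, Ideal.Quotient.eq_zero_iff_mem]
    exact Ideal.subset_span rfl
  have hb : ηb = η * c := by rw [hcdef]; linear_combination h
  have e : η + ηb = η ^ 2 * (-c) := by rw [hcdef]; linear_combination (1 - η) * h
  have h4 : (-c) - 1 = η * c := by rw [hcdef]; linear_combination hb
  have h3 := geom_sum_mul (-c) n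
  rw [h4] at h3
  have hzero : η ^ (2 * n) * ((-c) ^ n - 1) = 0 := by
    rw [← h3]
    calc η ^ (2 * n) * ((∑ i ∈ Finset.range n, (-c) ^ i) * (η * c))
        = η ^ (2 * n + 1) * ((∑ i ∈ Finset.range n, (-c) ^ i) * c) := by ring
      _ = 0 := by rw [hz, zero_mul]
  rw [e, mul_pow, ← pow_mul]
  linear_combination -hzero
end

section
/- Let m = 2u+1 be odd and n ≥ 1. In the quotient ring H = ℤ[x_1,…,x_m]/R_{2n}, where R_{2n} is generated by x_i x_j for i≠j, by x_i^{2n} - x_j^{2n} for i≠j, and by x_j^{2n+1} for all j, the coefficient of x_1^{2n} in the element c = (1 - (x_1+⋯+x_m))^{2n+1} · ∏_{r=1}^{u} ((1+x_r)(1-x_r)^{-1})^2 equals m(2n-1)+2. (Here (1-x_r) is a unit in H since x_r is nilpotent, with inverse 1+x_r+x_r^2+⋯+x_r^{2n}.) -/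
/-!
In `H` the generators are pairwise orthogonal and `x_j^{2n+1} = 0`, so `1 - ∑ x_j = ∏ (1 - x_j)`
and `c = ∏_j q_j(x_j)` with `q_j = (1 + X)²(1 - X)^{2n-1}` for `j < u` (two factors `1 - x_j`
cancel `(1 - x_j)⁻²`) and `q_j = (1 - X)^{2n+1}` otherwise. Each `q_j(x_j) - 1` is a multiple of
`x_j`, so orthogonality collapses the product to `c = 1 + ∑_j (q_j - 1)(x_j)`. As `x_j^{2n} = ω`
for every `j`, the coefficient of `ω` is `∑_j [X^{2n}] q_j = u(2n - 3) + (u + 1)(2n + 1)`.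
-/

open MvPolynomial

/-- The ideal `R_{2n}(x_1,…,x_m) ⊂ ℤ[x_1,…,x_m]` generated by `x_i x_j` (`i ≠ j`),
`x_i^{2n} - x_j^{2n}` (`i ≠ j`) and `x_j^{2n+1}`; the quotient models
`H^{even}(m # ℂP^{2n}; ℤ)`. -/
noncomputable def csIdeal (m n : ℕ) : Ideal (MvPolynomial (Fin m) ℤ) :=
  Ideal.span
    ({p | ∃ i j : Fin m, i ≠ j ∧ p = X i * X j} ∪
     {p | ∃ i j : Fin m, i ≠ j ∧ p = X i ^ (2 * n) - X j ^ (2 * n)} ∪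
     {p | ∃ j : Fin m, p = X j ^ (2 * n + 1)})

namespace csIdeal

variable {m n : ℕ}

theorem mk_X_mul_mk_X {i j : Fin m} (h : i ≠ j) :
    Ideal.Quotient.mk (csIdeal m n) (X i) * Ideal.Quotient.mk (csIdeal m n) (X j) = 0 := by
  rw [← map_mul, Ideal.Quotient.eq_zero_iff_mem]
  exact Ideal.subset_span (.inl (.inl ⟨i, j, h, rfl⟩))

theorem mk_X_pow_two_mul_eq (i j : Fin m) :
    Ideal.Quotient.mk (csIdeal m n) (X i) ^ (2 * n)
      = Ideal.Quotient.mk (csIdeal m n) (X j) ^ (2 * n) := by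
  rcases eq_or_ne i j with rfl | h
  · rfl
  rw [← map_pow, ← map_pow, Ideal.Quotient.mk_eq_mk_iff_sub_mem]
  exact Ideal.subset_span (.inl (.inr ⟨i, j, h, rfl⟩))

theorem mk_X_pow_two_mul_add_one (j : Fin m) :
    Ideal.Quotient.mk (csIdeal m n) (X j) ^ (2 * n + 1) = 0 := by
  rw [← map_pow, Ideal.Quotient.eq_zero_iff_mem]
  exact Ideal.subset_span (.inr ⟨j, rfl⟩)

end csIdeal

namespace Finset

variable {ι A : Type*} [CommRing A]

theorem prod_one_add_eq_one_add_sum {z : ι → A} (hz : Pairwise fun i j => z i * z j = 0)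
    (s : Finset ι) : ∏ i ∈ s, (1 + z i) = 1 + ∑ i ∈ s, z i := by
  classical
  induction s using Finset.induction_on with
  | empty => simp
  | insert a s ha ih =>
    have hzero : z a * ∑ i ∈ s, z i = 0 := by
      rw [mul_sum]
      exact sum_eq_zero fun i hi => hz (ne_of_mem_of_not_mem hi ha).symm
    rw [prod_insert ha, sum_insert ha, ih]
    linear_combination hzero

theorem one_sub_sum_eq_prod_one_sub {z : ι → A} (hz : Pairwise fun i j => z i * z j = 0)
    (s : Finset ι) : 1 - ∑ i ∈ s, z i = ∏ i ∈ s, (1 - z i) := by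
  have hneg : Pairwise fun i j => -z i * -z j = 0 := fun i j hij =>
    (neg_mul_neg _ _).trans (hz hij)
  simp only [sub_eq_add_neg, prod_one_add_eq_one_add_sum hneg, sum_neg_distrib]

end Finset

namespace Polynomial

variable {R A : Type*} [CommRing R] [CommRing A] [Algebra R A]

theorem aeval_mul_aeval_eq_zero {a b : A} (hab : a * b = 0) {p q : R[X]} (hp : p.coeff 0 = 0)
    (hq : q.coeff 0 = 0) : aeval a p * aeval b q = 0 := by
  obtain ⟨p, rfl⟩ := X_dvd_iff.mpr hp
  obtain ⟨q, rfl⟩ := X_dvd_iff.mpr hq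
  simp only [map_mul, aeval_X]
  linear_combination aeval a p * aeval b q * hab

theorem prod_aeval_eq_one_add_sum {ι : Type*} {y : ι → A}
    (hy : Pairwise fun i j => y i * y j = 0) {q : ι → R[X]} (hq : ∀ i, (q i).coeff 0 = 1)
    (s : Finset ι) : ∏ i ∈ s, aeval (y i) (q i) = 1 + ∑ i ∈ s, aeval (y i) (q i - 1) := by
  have hq' : ∀ i, (q i - 1).coeff 0 = 0 := fun i => by simp [hq]
  have horth : Pairwise fun i j => aeval (y i) (q i - 1) * aeval (y j) (q j - 1) = 0 :=
    fun i j hij => aeval_mul_aeval_eq_zero (hy hij) (hq' i) (hq' j)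
  simp_rw [← Finset.prod_one_add_eq_one_add_sum horth, map_sub, map_one, add_sub_cancel]

theorem aeval_sub_coeff_smul_pow_mem {M : Submodule R A} {a : A} {N : ℕ} (ha : a ^ (N + 1) = 0)
    (hM : ∀ k < N, a ^ k ∈ M) (p : R[X]) : aeval a p - p.coeff N • a ^ N ∈ M := by
  induction p using Polynomial.induction_on' with
  | add p q hp hq =>
    simpa only [map_add, coeff_add, add_smul, add_sub_add_comm] using M.add_mem hp hq
  | monomial k c =>
    rw [aeval_monomial, ← Algebra.smul_def, coeff_monomial]
    rcases lt_trichotomy k N with hk | rfl | hk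
    · simpa [hk.ne] using M.smul_mem c (hM k hk)
    · simp
    · simp [hk.ne', pow_eq_zero_of_le hk ha]

theorem coeff_one_sub_X_pow (N k : ℕ) :
    ((1 - X : R[X]) ^ N).coeff k = (-1) ^ k * N.choose k := by
  rcases le_or_gt k N with hk | hk
  · obtain ⟨j, rfl⟩ := exists_add_of_le hk
    rw [show (1 - X : R[X]) = C (-1) * (X + C (-1)) by simp; ring, mul_pow, ← C_pow, coeff_C_mul,
      coeff_X_add_C_pow, Nat.add_sub_cancel_left, pow_add, mul_assoc, ← mul_assoc ((-1) ^ j),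
      ← mul_pow, neg_one_mul, neg_neg, one_pow, one_mul]
  · rw [Nat.choose_eq_zero_of_lt hk, Nat.cast_zero, mul_zero]
    refine coeff_eq_zero_of_natDegree_lt
      ((natDegree_pow_le_of_le (m := 1) N ?_).trans_lt (by rwa [mul_one]))
    compute_degree

theorem one_sub_pow_mul_one_add_mul_geom_sum_sq {a : A} {N : ℕ} (hN : 1 ≤ N)
    (ha : a ^ (N + 1) = 0) :
    (1 - a) ^ (N + 1) * ((1 + a) * ∑ k ∈ Finset.range (N + 1), a ^ k) ^ 2
      = aeval a ((1 + X : R[X]) ^ 2 * (1 - X) ^ (N - 1)) := by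
  have hinv := mul_neg_geom_sum a (N + 1)
  rw [ha, sub_zero] at hinv
  obtain ⟨M, rfl⟩ := exists_add_of_le hN
  simp only [map_mul, map_pow, map_add, map_sub, map_one, aeval_X, add_tsub_cancel_left]
  linear_combination (1 + a) ^ 2 * (1 - a) ^ M *
    ((1 - a) * ∑ k ∈ Finset.range (1 + M + 1), a ^ k + 1) * hinv

theorem coeff_one_sub_X_pow_two_mul_add_one (n : ℕ) :
    ((1 - X : ℤ[X]) ^ (2 * n + 1)).coeff (2 * n) = 2 * (n : ℤ) + 1 := by
  rw [coeff_one_sub_X_pow, pow_mul, neg_one_sq, one_pow, one_mul, Nat.choose_succ_self_right]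
  push_cast; ring

theorem coeff_one_add_X_sq_mul_one_sub_X_pow {n : ℕ} (hn : 1 ≤ n) :
    ((1 + X : ℤ[X]) ^ 2 * (1 - X) ^ (2 * n - 1)).coeff (2 * n) = 2 * (n : ℤ) - 3 := by
  obtain ⟨k, rfl⟩ := exists_add_of_le hn
  have hexp : (1 + X : ℤ[X]) ^ 2 * (1 - X) ^ (2 * (1 + k) - 1)
      = X ^ 2 * (1 - X) ^ (2 * k + 1) + C 2 * (X * (1 - X) ^ (2 * k + 1))
        + (1 - X) ^ (2 * k + 1) := by
    rw [show 2 * (1 + k) - 1 = 2 * k + 1 by omega, map_ofNat]; ring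
  rw [hexp, coeff_add, coeff_add, coeff_C_mul, show 2 * (1 + k) = 2 * k + 2 by ring,
    coeff_X_pow_mul', coeff_X_mul, coeff_one_sub_X_pow, coeff_one_sub_X_pow,
    coeff_one_sub_X_pow, if_pos (by omega), Nat.add_sub_cancel, Nat.choose_succ_self_right,
    Nat.choose_self, Nat.choose_eq_zero_of_lt (by omega)]
  simp [pow_succ, pow_mul]
  ring

end Polynomial

noncomputable def localFactor (R : Type*) [CommRing R] (n u j : ℕ) : Polynomial R :=
  if j < u then (1 + Polynomial.X) ^ 2 * (1 - Polynomial.X) ^ (2 * n - 1)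
  else (1 - Polynomial.X) ^ (2 * n + 1)

theorem coeff_zero_localFactor (R : Type*) [CommRing R] (n u j : ℕ) :
    (localFactor R n u j).coeff 0 = 1 := by
  unfold localFactor; split_ifs <;> simp [Polynomial.coeff_zero_eq_eval_zero]

theorem sum_coeff_localFactor_sub_one {n : ℕ} (hn : 1 ≤ n) (u : ℕ) :
    ∑ j : Fin (2 * u + 1), (localFactor ℤ n u j - 1).coeff (2 * n)
      = (2 * (u : ℤ) + 1) * (2 * (n : ℤ) - 1) + 2 := by
  have hcoeff : ∀ j : ℕ, (localFactor ℤ n u j - 1).coeff (2 * n)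
      = if j < u then 2 * (n : ℤ) - 3 else 2 * n + 1 := fun j => by
    rw [Polynomial.coeff_sub, Polynomial.coeff_one, if_neg (by omega), sub_zero, localFactor,
      apply_ite (Polynomial.coeff · _), Polynomial.coeff_one_add_X_sq_mul_one_sub_X_pow hn,
      Polynomial.coeff_one_sub_X_pow_two_mul_add_one]
  have hcompl : (Finset.univ.filter fun j : Fin (2 * u + 1) => ¬ (j : ℕ) < u).card = u + 1 := by
    have hcard := Finset.card_filter_add_card_filter_not (s := Finset.univ)
      fun j : Fin (2 * u + 1) => (j : ℕ) < u
    rw [Fin.card_filter_val_lt, Finset.card_univ, Fintype.card_fin] at hcard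
    omega
  rw [Finset.sum_congr rfl fun (j : Fin (2 * u + 1)) _ => hcoeff j, Finset.sum_ite,
    Finset.sum_const, Finset.sum_const, Fin.card_filter_val_lt, min_eq_right (by omega), hcompl,
    nsmul_eq_mul, nsmul_eq_mul]
  push_cast
  ring

theorem one_sub_sum_pow_mul_prod_eq_prod_aeval_localFactor {R A : Type*} [CommRing R]
    [CommRing A] [Algebra R A] {n u : ℕ} (hn : 1 ≤ n) {x : Fin (2 * u + 1) → A}
    (hx : Pairwise fun i j => x i * x j = 0) (hnil : ∀ j, x j ^ (2 * n + 1) = 0) :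
    (1 - ∑ j, x j) ^ (2 * n + 1) *
        ∏ r ∈ Finset.univ.filter (fun i : Fin (2 * u + 1) => (i : ℕ) < u),
          ((1 + x r) * ∑ k ∈ Finset.range (2 * n + 1), x r ^ k) ^ 2
      = ∏ j, Polynomial.aeval (x j) (localFactor R n u j) := by
  rw [Finset.one_sub_sum_eq_prod_one_sub hx, ← Finset.prod_pow, Finset.prod_filter,
    ← Finset.prod_mul_distrib]
  refine Finset.prod_congr rfl fun j _ => ?_
  rw [localFactor]
  split_ifs
  · exact Polynomial.one_sub_pow_mul_one_add_mul_geom_sum_sq (by omega) (hnil j)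
  · simp

/-- Let `m = 2u+1` be odd, `n ≥ 1`, and work in `H = ℤ[x_1,…,x_m]/R_{2n}`.
The coefficient of `ω = x_1^{2n}` (in the basis `1`, `x_j^k` (`1 ≤ k ≤ 2n-1`), `ω`)
of `c = (1-(x_1+⋯+x_m))^{2n+1} ∏_{r=1}^{u} ((1+x_r)(1-x_r)^{-1})^2` equals
`m(2n-1)+2`; i.e. `c - (m(2n-1)+2)·ω` is a `ℤ`-linear combination of `1` and the
`x_j^k` with `1 ≤ k ≤ 2n-1`.  Here `(1-x_r)^{-1} = Σ_{k=0}^{2n} x_r^k`. -/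
theorem stmt_3 (n u : ℕ) (hn : 1 ≤ n)
    (x : Fin (2 * u + 1) → (MvPolynomial (Fin (2 * u + 1)) ℤ ⧸ csIdeal (2 * u + 1) n))
    (hx : ∀ j, x j = Ideal.Quotient.mk _ (X j)) :
    ((1 - ∑ j, x j) ^ (2 * n + 1) *
        ∏ r ∈ Finset.univ.filter (fun i : Fin (2 * u + 1) => (i : ℕ) < u),
          ((1 + x r) * ∑ k ∈ Finset.range (2 * n + 1), x r ^ k) ^ 2)
      - ((2 * (u : ℤ) + 1) * (2 * (n : ℤ) - 1) + 2) • (x 0) ^ (2 * n)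
    ∈ Submodule.span ℤ
        (({1} ∪ {p | ∃ (j : Fin (2 * u + 1)) (k : ℕ), 1 ≤ k ∧ k ≤ 2 * n - 1 ∧ p = x j ^ k})
          : Set (MvPolynomial (Fin (2 * u + 1)) ℤ ⧸ csIdeal (2 * u + 1) n)) := by
  have hmul : Pairwise fun i j => x i * x j = 0 := fun i j hij => by
    simpa only [hx] using csIdeal.mk_X_mul_mk_X hij
  have hnil : ∀ j, x j ^ (2 * n + 1) = 0 := fun j => by
    rw [hx]; exact csIdeal.mk_X_pow_two_mul_add_one j
  have hω : ∀ j, x j ^ (2 * n) = x 0 ^ (2 * n) := fun j => by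
    rw [hx, hx]; exact csIdeal.mk_X_pow_two_mul_eq j 0
  rw [one_sub_sum_pow_mul_prod_eq_prod_aeval_localFactor (R := ℤ) hn hmul hnil,
    Polynomial.prod_aeval_eq_one_add_sum hmul (fun j => coeff_zero_localFactor ℤ n u j),
    ← sum_coeff_localFactor_sub_one hn u, Finset.sum_smul, add_sub_assoc,
    ← Finset.sum_sub_distrib]
  refine add_mem (Submodule.subset_span (.inl rfl)) (Submodule.sum_mem _ fun j _ => ?_)
  rw [← hω j]
  refine Polynomial.aeval_sub_coeff_smul_pow_mem (hnil j) (fun k hk => Submodule.subset_span ?_) _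
  rcases k with _ | k
  · exact .inl (pow_zero _)
  · exact .inr ⟨j, k + 1, by omega, by omega, rfl⟩
end

section
/- In ℤ[x]/(x^{2n+1}), define w^k = (1+x)^k - (1+x)^{-k} for k ≥ 1 (well-defined since 1+x is a unit). Then for each k ≥ 0, (η-η̄)(η+η̄)^k = w^{k+1} + (a ℤ-linear combination of w^1,…,w^k), where η = x and η̄ = (1+x)^{-1} - 1. -/
/-!
Put `u = 1 + η` and `v = 1 + η̄`, so that `u * v = 1`, `η - η̄ = u - v`, `η + η̄ = u + v - 2`
and `w k = u ^ k - v ^ k`. From `u * v = 1` one gets `(u + v) * w (i + 1) = w (i + 2) + w i`,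
so multiplication by `u + v - 2` maps the `ℤ`-span of `w 1, …, w k` into that of
`w 1, …, w (k + 1)`, with `w (k + 1) ↦ w (k + 2) + (w k - 2 * w (k + 1))`. Induction on `k`
finishes.
-/

open Polynomial

section PowSubPow

variable {R : Type*} [CommRing R] {u v : R}

variable (u v) in
def powSubPowSpan (k : ℕ) : Submodule ℤ R :=
  Submodule.span ℤ ((fun i ↦ u ^ i - v ^ i) '' ↑(Finset.Icc 1 k))

lemma powSubPowSpan_mono {j k : ℕ} (h : j ≤ k) : powSubPowSpan u v j ≤ powSubPowSpan u v k :=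
  Submodule.span_mono <| Set.image_mono <| Finset.coe_subset.mpr <| Finset.Icc_subset_Icc_right h

lemma pow_sub_pow_mem_powSubPowSpan {i k : ℕ} (h : i ≤ k) :
    u ^ i - v ^ i ∈ powSubPowSpan u v k := by
  rcases i.eq_zero_or_pos with rfl | hi
  · simp
  · exact Submodule.subset_span ⟨i, by simp [Nat.one_le_iff_ne_zero.mpr hi.ne', h], rfl⟩

lemma add_mul_pow_sub_pow_of_mul_eq_one (huv : u * v = 1) (i : ℕ) :
    (u + v) * (u ^ (i + 1) - v ^ (i + 1)) = (u ^ (i + 2) - v ^ (i + 2)) + (u ^ i - v ^ i) := by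
  linear_combination (u ^ i - v ^ i) * huv

lemma add_mul_mem_powSubPowSpan (huv : u * v = 1) {k : ℕ} {x : R}
    (hx : x ∈ powSubPowSpan u v k) : (u + v) * x ∈ powSubPowSpan u v (k + 1) := by
  suffices (powSubPowSpan u v k).map (LinearMap.mulLeft ℤ (u + v)) ≤
      powSubPowSpan u v (k + 1) from this (Submodule.mem_map_of_mem hx)
  rw [powSubPowSpan, Submodule.map_span_le]
  rintro _ ⟨i, hi, rfl⟩
  rw [Finset.coe_Icc, Set.mem_Icc] at hi
  obtain ⟨j, rfl⟩ : ∃ j, i = j + 1 := ⟨i - 1, by omega⟩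
  rw [LinearMap.mulLeft_apply, add_mul_pow_sub_pow_of_mul_eq_one huv]
  exact add_mem (pow_sub_pow_mem_powSubPowSpan (by omega))
    (pow_sub_pow_mem_powSubPowSpan (by omega))

lemma sub_mul_add_sub_two_pow_sub_mem_powSubPowSpan (huv : u * v = 1) (k : ℕ) :
    (u - v) * (u + v - 2) ^ k - (u ^ (k + 1) - v ^ (k + 1)) ∈ powSubPowSpan u v k := by
  induction k with
  | zero => simp
  | succ k ih =>
    set D := (u - v) * (u + v - 2) ^ k - (u ^ (k + 1) - v ^ (k + 1))
    have step : (u - v) * (u + v - 2) ^ (k + 1) - (u ^ (k + 2) - v ^ (k + 2)) =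
        (u + v) * D - 2 • D + (u ^ k - v ^ k) - 2 • (u ^ (k + 1) - v ^ (k + 1)) := by
      linear_combination add_mul_pow_sub_pow_of_mul_eq_one huv k
    rw [step]
    have hD : D ∈ powSubPowSpan u v (k + 1) := powSubPowSpan_mono k.le_succ ih
    refine sub_mem (add_mem (sub_mem (add_mul_mem_powSubPowSpan huv ih) (nsmul_mem hD 2)) ?_)
      (nsmul_mem ?_ 2) <;>
    exact pow_sub_pow_mem_powSubPowSpan (by omega)

theorem exists_sub_mul_add_sub_two_pow_eq (huv : u * v = 1) (k : ℕ) :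
    ∃ a : ℕ → ℤ, (u - v) * (u + v - 2) ^ k =
      (u ^ (k + 1) - v ^ (k + 1)) + ∑ i ∈ Finset.Icc 1 k, a i • (u ^ i - v ^ i) := by
  obtain ⟨a, ha⟩ := (Submodule.mem_span_image_finset_iff_exists_fun' ℤ).mp
    (sub_mul_add_sub_two_pow_sub_mem_powSubPowSpan huv k)
  exact ⟨a, by rw [ha]; ring⟩

end PowSubPow

theorem stmt_9_general (n : ℕ)
    (η ηb : Polynomial ℤ ⧸ Ideal.span {(X : Polynomial ℤ) ^ (2 * n + 1)})
    (h : (1 + η) * (1 + ηb) = 1)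
    (w : ℕ → Polynomial ℤ ⧸ Ideal.span {(X : Polynomial ℤ) ^ (2 * n + 1)})
    (hw : ∀ k : ℕ, w k = (1 + η) ^ k - (1 + ηb) ^ k) :
    ∀ k : ℕ, k ≤ n - 1 → ∃ a : ℕ → ℤ,
      (η - ηb) * (η + ηb) ^ k = w (k + 1) + ∑ i ∈ Finset.Icc 1 k, a i • w i := by
  intro k _
  obtain ⟨a, ha⟩ := exists_sub_mul_add_sub_two_pow_eq h k
  refine ⟨a, ?_⟩
  simp only [hw]
  convert ha using 2 <;> ring

/-- In `ℤ[x]/(x^{2n+1})`, with `η` the image of `X`, `η̄ = (1+η)⁻¹ - 1`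
(i.e. `(1+η)(1+η̄) = 1`) and `w^k = (1+η)^k - (1+η)^{-k} = (1+η)^k - (1+η̄)^k`,
for each `0 ≤ k ≤ n-1` the element `(η-η̄)(η+η̄)^k` equals `w^{k+1}` plus a
`ℤ`-linear combination of `w^1, …, w^k`. -/
theorem stmt_9 (n : ℕ) (hn : 1 ≤ n)
    (η ηb : Polynomial ℤ ⧸ Ideal.span {(X : Polynomial ℤ) ^ (2 * n + 1)})
    (hη : η = Ideal.Quotient.mk _ X)
    (h : (1 + η) * (1 + ηb) = 1)
    (w : ℕ → Polynomial ℤ ⧸ Ideal.span {(X : Polynomial ℤ) ^ (2 * n + 1)})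
    (hw : ∀ k : ℕ, w k = (1 + η) ^ k - (1 + ηb) ^ k) :
    ∀ k : ℕ, k ≤ n - 1 → ∃ a : ℕ → ℤ,
      (η - ηb) * (η + ηb) ^ k = w (k + 1) + ∑ i ∈ Finset.Icc 1 k, a i • w i :=
  stmt_9_general n η ηb h w hw
end

section
/- In ℤ[x]/(x^{2n+1}) with η = x and η̄ = (1+η)^{-1} - 1, the relation η^{2n} = 2η(η+η̄)^{n-1} - (η-η̄)(η+η̄)^{n-1} holds, and the 2n+1 elements 1, η(η+η̄)^k for 0≤k≤n-1, and (η-η̄)(η+η̄)^k for 0≤k≤n-1 form a ℤ-basis of ℤ[x]/(x^{2n+1}) as a free ℤ-module. -/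
open Polynomial

set_option maxHeartbeats 1000000 in
/-- In `R = ℤ[x]/(x^{2n+1})` with `η = x` and `η̄ = (1+η)⁻¹ - 1`, the relation
`η^{2n} = 2η(η+η̄)^{n-1} - (η-η̄)(η+η̄)^{n-1}` holds, and the `2n+1` elements
`1`, `η(η+η̄)^k` (`0 ≤ k ≤ n-1`), `(η-η̄)(η+η̄)^k` (`0 ≤ k ≤ n-1`) form a
`ℤ`-basis of `R` as a free `ℤ`-module. -/
theorem stmt_10 (n : ℕ) (hn : 1 ≤ n)
    (η ηb : Polynomial ℤ ⧸ Ideal.span {(X : Polynomial ℤ) ^ (2 * n + 1)})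
    (hη : η = Ideal.Quotient.mk _ X)
    (h : (1 + η) * (1 + ηb) = 1) :
    (η ^ (2 * n) = 2 * (η * (η + ηb) ^ (n - 1)) - (η - ηb) * (η + ηb) ^ (n - 1)) ∧
    (∃ B : Module.Basis (Unit ⊕ Fin n ⊕ Fin n) ℤ
        (Polynomial ℤ ⧸ Ideal.span {(X : Polynomial ℤ) ^ (2 * n + 1)}),
      (B (Sum.inl ()) = 1) ∧
      (∀ k : Fin n, B (Sum.inr (Sum.inl k)) = η * (η + ηb) ^ (k : ℕ)) ∧
      (∀ k : Fin n, B (Sum.inr (Sum.inr k)) = (η - ηb) * (η + ηb) ^ (k : ℕ))) := by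
  have hη0 : η ^ (2 * n + 1) = 0 := by
    rw [hη, ← map_pow]
    exact Ideal.Quotient.eq_zero_iff_mem.mpr (Ideal.subset_span rfl)
  have hb : ηb = -(η * (1 + ηb)) := by linear_combination h
  have hsum : η + ηb = η ^ 2 * (1 + ηb) := by linear_combination (1 - η) * h
  have hus : ∀ e : ℕ, ∃ s, (1 + ηb) ^ e = 1 + η * s := by
    intro e
    induction e with
    | zero => exact ⟨0, by ring⟩
    | succ e ih =>
      obtain ⟨s, hs⟩ := ih
      exact ⟨s - (1 + ηb) * (1 + η * s), by linear_combination (1 + η * s) * h + (1 + ηb) * hs⟩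
  have hsp : ∀ m : ℕ, (η + ηb) ^ m = η ^ (2 * m) * (1 + ηb) ^ m := by
    intro m
    induction m with
    | zero => simp
    | succ m ih =>
      linear_combination (η + ηb) * ih + η ^ (2 * m) * (1 + ηb) ^ m * hsum
  have hzb : η ^ (2 * n) * ηb = 0 := by
    linear_combination η ^ (2 * n) * h - (1 + ηb) * hη0
  have hpow : ∀ m : ℕ, η ^ (2 * n) * (1 + ηb) ^ m = η ^ (2 * n) := by
    intro m
    induction m with
    | zero => simp
    | succ m ih => linear_combination (1 + ηb) * ih + hzb
  constructor
  · -- the relation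
    obtain ⟨m, rfl⟩ : ∃ m, n = m + 1 := ⟨n - 1, (Nat.succ_pred_eq_of_pos hn).symm⟩
    simp only [Nat.add_sub_cancel]
    have hkey : 2 * (η * (η + ηb) ^ m) - (η - ηb) * (η + ηb) ^ m
        = η ^ (2 * (m + 1)) * (1 + ηb) ^ (m + 1) := by
      linear_combination (η + ηb) * hsp m + η ^ (2 * m) * (1 + ηb) ^ m * hsum
    linear_combination -hkey - hpow (m + 1)
  · -- the basis
    let pb := AdjoinRoot.powerBasis' (monic_X_pow (R := ℤ) (n := 2 * n + 1))
    let Q0 : Module.Basis (Fin pb.dim) ℤ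
        (Polynomial ℤ ⧸ Ideal.span {(X : Polynomial ℤ) ^ (2 * n + 1)}) := pb.basis
    haveI : Module.Finite ℤ (Polynomial ℤ ⧸ Ideal.span {(X : Polynomial ℤ) ^ (2 * n + 1)}) :=
      Module.Finite.of_basis Q0
    have hcard : Fintype.card (Unit ⊕ Fin n ⊕ Fin n) = Fintype.card (Fin pb.dim) := by
      simp [pb, AdjoinRoot.powerBasis'_dim, natDegree_X_pow]
      omega
    let Q : Module.Basis (Unit ⊕ Fin n ⊕ Fin n) ℤ
        (Polynomial ℤ ⧸ Ideal.span {(X : Polynomial ℤ) ^ (2 * n + 1)}) :=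
      Q0.reindex (Fintype.equivOfCardEq hcard).symm
    let v : (Unit ⊕ Fin n ⊕ Fin n) → (Polynomial ℤ ⧸ Ideal.span {(X : Polynomial ℤ) ^ (2 * n + 1)}) :=
      Sum.elim (fun _ => 1)
        (Sum.elim (fun k => η * (η + ηb) ^ (k : ℕ)) (fun k => (η - ηb) * (η + ηb) ^ (k : ℕ)))
    set M := Submodule.span ℤ (Set.range v) with hMdef
    have hjmem : ∀ j ≤ 2 * n, ∃ s, η ^ j + η ^ (j + 1) * s ∈ M := by
      intro j hj
      obtain ⟨k, rfl | rfl⟩ : ∃ k, j = 2 * k ∨ j = 2 * k + 1 := ⟨j / 2, by omega⟩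
      · rcases k with _ | k'
        · refine ⟨0, ?_⟩
          have h1 : η ^ (2 * 0) + η ^ (2 * 0 + 1) * 0 = v (Sum.inl ()) := by
            simp [v]
          rw [h1]
          exact Submodule.subset_span (Set.mem_range_self _)
        · have hk' : k' < n := by omega
          obtain ⟨s, hs⟩ := hus (k' + 1)
          refine ⟨s, ?_⟩
          have key : η ^ (2 * (k' + 1)) + η ^ (2 * (k' + 1) + 1) * s
              = (v (Sum.inr (Sum.inl ⟨k', hk'⟩)) + v (Sum.inr (Sum.inl ⟨k', hk'⟩)))
                - v (Sum.inr (Sum.inr ⟨k', hk'⟩)) := by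
            simp only [v, Sum.elim_inr, Sum.elim_inl]
            linear_combination (-(η + ηb)) * hsp k' + (-(η ^ (2 * k') * (1 + ηb) ^ k')) * hsum
              + (-(η ^ (2 * k' + 2))) * hs
          rw [key]
          exact sub_mem (add_mem (Submodule.subset_span (Set.mem_range_self _))
              (Submodule.subset_span (Set.mem_range_self _)))
            (Submodule.subset_span (Set.mem_range_self _))
      · have hk : k < n := by omega
        obtain ⟨s, hs⟩ := hus k
        refine ⟨s, ?_⟩
        have key : η ^ (2 * k + 1) + η ^ (2 * k + 1 + 1) * s
            = v (Sum.inr (Sum.inl ⟨k, hk⟩)) := by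
          simp only [v, Sum.elim_inr, Sum.elim_inl]
          linear_combination (-η) * hsp k + (-(η ^ (2 * k + 1))) * hs
        rw [key]
        exact Submodule.subset_span (Set.mem_range_self _)
    have hspan : ∀ d j, 2 * n + 1 ≤ j + d →
        ∀ z : (Polynomial ℤ ⧸ Ideal.span {(X : Polynomial ℤ) ^ (2 * n + 1)}), η ^ j * z ∈ M := by
      intro d
      induction d with
      | zero =>
        intro j hj z
        have hz : η ^ j = 0 := by
          rw [show j = (2 * n + 1) + (j - (2 * n + 1)) by omega,
            pow_add η (2 * n + 1) (j - (2 * n + 1)), hη0, zero_mul]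
        rw [hz, zero_mul]
        exact zero_mem _
      | succ d ih =>
        intro j hj z
        by_cases hj' : 2 * n + 1 ≤ j + d
        · exact ih j hj' z
        · have hjle : j ≤ 2 * n := by omega
          obtain ⟨p, rfl⟩ := Ideal.Quotient.mk_surjective z
          have hdec : (Ideal.Quotient.mk (Ideal.span {(X : Polynomial ℤ) ^ (2 * n + 1)}) p)
              = (p.coeff 0 : ℤ) • (1 : Polynomial ℤ ⧸ Ideal.span {(X : Polynomial ℤ) ^ (2 * n + 1)})
                + η * Ideal.Quotient.mk _ p.divX := by
            have hc : (Ideal.Quotient.mk (Ideal.span {(X : Polynomial ℤ) ^ (2 * n + 1)}))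
                (C (p.coeff 0))
                = ((p.coeff 0 : ℤ) :
                    Polynomial ℤ ⧸ Ideal.span {(X : Polynomial ℤ) ^ (2 * n + 1)}) :=
              eq_intCast ((Ideal.Quotient.mk _).comp (C : ℤ →+* Polynomial ℤ)) _
            conv_lhs => rw [← X_mul_divX_add p]
            rw [map_add, map_mul, ← hη, hc, zsmul_eq_mul]
            ring
          rw [hdec, mul_add]
          refine add_mem ?_ ?_
          · rw [mul_smul_comm, mul_one]
            refine Submodule.smul_mem _ _ ?_
            obtain ⟨s, hs⟩ := hjmem j hjle
            have h2 : η ^ j = (η ^ j + η ^ (j + 1) * s) - η ^ (j + 1) * s := by ring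
            rw [h2]
            exact sub_mem hs (ih (j + 1) (by omega) s)
          · rw [← mul_assoc, ← pow_succ]
            exact ih (j + 1) (by omega) _
    have hM : M = ⊤ := by
      rw [eq_top_iff]
      intro z _
      simpa using hspan (2 * n + 1) 0 (by omega) z
    have hTv : ∀ i, (Q.constr ℤ v) (Q i) = v i := fun i => Q.constr_basis ℤ v i
    have hsurj : Function.Surjective (Q.constr ℤ v) := by
      rw [← LinearMap.range_eq_top, eq_top_iff, ← hM]
      refine Submodule.span_le.2 ?_
      rintro _ ⟨i, rfl⟩
      exact ⟨Q i, hTv i⟩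
    have hinj : Function.Injective (Q.constr ℤ v) :=
      OrzechProperty.injective_of_surjective_endomorphism _ hsurj
    refine ⟨Q.map (LinearEquiv.ofBijective (Q.constr ℤ v) (show Function.Bijective (Q.constr ℤ v) from ⟨hinj, hsurj⟩)), ?_, ?_, ?_⟩
    · rw [Module.Basis.map_apply, LinearEquiv.ofBijective_apply]
      exact hTv (Sum.inl ())
    · intro k
      rw [Module.Basis.map_apply, LinearEquiv.ofBijective_apply]
      exact hTv (Sum.inr (Sum.inl k))
    · intro k
      rw [Module.Basis.map_apply, LinearEquiv.ofBijective_apply]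
      exact hTv (Sum.inr (Sum.inr k))
end

section
/- Let n ≥ 1. The ring ℤ[x_1,…,x_m]/R_{2n}(x_1,…,x_m), with R_{2n} generated by x_i x_j (i≠j), x_i^{2n}-x_j^{2n} (i≠j), x_j^{2n+1}, is a free ℤ-module of rank m(2n-1)+2, with basis {1} ∪ {x_j^k : 1≤j≤m, 1≤k≤2n-1} ∪ {ω} where ω is the common image of the x_j^{2n}. -/
open MvPolynomial

/-!
Every monomial of degree `≥ 2n + 1` or involving two variables lies in `R_{2n}`, and all the
`x_j^{2n}` agree modulo `R_{2n}`; hence the listed classes span. For independence, read off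
coordinates monomial by monomial: `1 ↦ e₁`, `x_j^k ↦ e_{j,k}` for `0 < k < 2n`, every
`x_j^{2n} ↦ e_ω`, all other monomials `↦ 0`. This `ℤ`-linear map kills `q·g` for every monomial
`q` and generator `g` of `R_{2n}` (the only cancellation is `e_ω - e_ω` for
`g = x_i^{2n} - x_j^{2n}`), so it descends to the quotient and sends the proposed basis to the
standard basis of `ℤ^{m(2n-1)+2}`.
-/

namespace ConnectedSumCP

variable {m n : ℕ}

lemma X_mul_X_mem {i j : Fin m} (hij : i ≠ j) : X i * X j ∈ csIdeal m n :=
  Ideal.subset_span (Or.inl (Or.inl ⟨i, j, hij, rfl⟩))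

lemma X_pow_sub_X_pow_mem {i j : Fin m} (hij : i ≠ j) :
    X i ^ (2 * n) - X j ^ (2 * n) ∈ csIdeal m n :=
  Ideal.subset_span (Or.inl (Or.inr ⟨i, j, hij, rfl⟩))

lemma X_pow_mem {j : Fin m} {k : ℕ} (hk : 2 * n < k) : X j ^ k ∈ csIdeal m n :=
  Ideal.mem_of_dvd _ (pow_dvd_pow _ hk) (Ideal.subset_span (Or.inr ⟨j, rfl⟩))

lemma monomial_mem_of_ne {μ : Fin m →₀ ℕ} {i j : Fin m} (hij : i ≠ j) (hi : μ i ≠ 0)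
    (hj : μ j ≠ 0) (c : ℤ) : monomial μ c ∈ csIdeal m n := by
  refine Ideal.mem_of_dvd _ ?_ (X_mul_X_mem hij)
  rw [X, X, monomial_mul, one_mul, monomial_dvd_monomial]
  refine ⟨Or.inr fun t => ?_, one_dvd c⟩
  simp only [Finsupp.add_apply, Finsupp.single_apply]
  split_ifs <;> subst_vars <;> omega

lemma mk_X_pow_two_mul (i j : Fin m) :
    Ideal.Quotient.mk (csIdeal m n) (X i ^ (2 * n)) = Ideal.Quotient.mk _ (X j ^ (2 * n)) := by
  rcases eq_or_ne i j with rfl | hij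
  · rfl
  · exact Ideal.Quotient.eq.mpr (X_pow_sub_X_pow_mem hij)

lemma eq_zero_or_eq_single_or_two_support {σ M : Type*} [Zero M] (μ : σ →₀ M) :
    μ = 0 ∨ (∃ j, μ j ≠ 0 ∧ μ = Finsupp.single j (μ j)) ∨
      ∃ i j, i ≠ j ∧ μ i ≠ 0 ∧ μ j ≠ 0 := by
  rcases Nat.lt_or_ge 1 μ.support.card with h | h
  · obtain ⟨i, hi, j, hj, hij⟩ := Finset.one_lt_card.mp h
    exact .inr (.inr ⟨i, j, hij, Finsupp.mem_support_iff.mp hi, Finsupp.mem_support_iff.mp hj⟩)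
  · interval_cases h' : μ.support.card
    · exact .inl (Finsupp.card_support_eq_zero.mp h')
    · exact .inr (.inl (Finsupp.card_support_eq_one.mp h'))

variable (m n) in
abbrev Idx := Unit ⊕ (Fin m × Fin (2 * n - 1)) ⊕ Unit

variable (n) in
noncomputable def basisPoly (hm : 1 ≤ m) : Idx m n → MvPolynomial (Fin m) ℤ
  | .inl _ => 1
  | .inr (.inl (j, k)) => X j ^ ((k : ℕ) + 1)
  | .inr (.inr _) => X ⟨0, hm⟩ ^ (2 * n)

lemma mk_X_pow_mem_span (hm : 1 ≤ m) (j : Fin m) {k : ℕ} (hk : k ≠ 0) :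
    Ideal.Quotient.mk (csIdeal m n) (X j ^ k) ∈
      Submodule.span ℤ (Set.range (Ideal.Quotient.mk _ ∘ basisPoly n hm)) := by
  rcases lt_trichotomy k (2 * n) with hlt | rfl | hgt
  · refine Submodule.subset_span ⟨.inr (.inl (j, ⟨k - 1, by omega⟩)), ?_⟩
    simp only [Function.comp_apply, basisPoly, Nat.sub_add_cancel (Nat.one_le_iff_ne_zero.mpr hk)]
  · exact Submodule.subset_span ⟨.inr (.inr ()), mk_X_pow_two_mul _ _⟩
  · rw [Ideal.Quotient.eq_zero_iff_mem.mpr (X_pow_mem hgt)]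
    exact zero_mem _

lemma mk_monomial_mem_span (hm : 1 ≤ m) (μ : Fin m →₀ ℕ) :
    Ideal.Quotient.mk (csIdeal m n) (monomial μ 1) ∈
      Submodule.span ℤ (Set.range (Ideal.Quotient.mk _ ∘ basisPoly n hm)) := by
  rcases eq_zero_or_eq_single_or_two_support μ with
    rfl | ⟨j, hj, hμ⟩ | ⟨i, j, hij, hi, hj⟩
  · exact Submodule.subset_span ⟨.inl (), by simp [basisPoly]⟩
  · rw [hμ, ← X_pow_eq_monomial]
    exact mk_X_pow_mem_span hm j hj
  · rw [Ideal.Quotient.eq_zero_iff_mem.mpr (monomial_mem_of_ne hij hi hj 1)]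
    exact zero_mem _

lemma span_basisPoly_eq_top (hm : 1 ≤ m) :
    Submodule.span ℤ (Set.range (Ideal.Quotient.mk (csIdeal m n) ∘ basisPoly n hm)) = ⊤ := by
  rw [eq_top_iff]
  rintro y -
  obtain ⟨p, rfl⟩ := Ideal.Quotient.mk_surjective y
  induction p using MvPolynomial.induction_on' with
  | monomial μ c =>
    rw [← mul_one c, ← smul_eq_mul, ← smul_monomial, map_zsmul]
    exact Submodule.smul_mem _ _ (mk_monomial_mem_span hm μ)
  | add p q hp hq =>
    rw [map_add]
    exact add_mem hp hq

variable (n) in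
noncomputable def powCoords (j : Fin m) (k : ℕ) : Idx m n →₀ ℤ :=
  if h : 0 < k ∧ k < 2 * n then Finsupp.single (.inr (.inl (j, ⟨k - 1, by omega⟩))) 1
  else if k = 2 * n then Finsupp.single (.inr (.inr ())) 1
  else 0

variable (n) in
noncomputable def monomialCoords (μ : Fin m →₀ ℕ) : Idx m n →₀ ℤ :=
  if μ = 0 then Finsupp.single (.inl ()) 1
  else if μ.support.card = 1 then ∑ j ∈ μ.support, powCoords n j (μ j)
  else 0

variable (m n) in
noncomputable def coords : MvPolynomial (Fin m) ℤ →ₗ[ℤ] (Idx m n →₀ ℤ) :=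
  (basisMonomials (Fin m) ℤ).constr ℤ (monomialCoords n)

lemma powCoords_two_mul (j : Fin m) :
    powCoords n j (2 * n) = Finsupp.single (.inr (.inr ())) 1 := by
  simp [powCoords]

lemma powCoords_eq_zero {j : Fin m} {k : ℕ} (hk : 2 * n < k) : powCoords n j k = 0 := by
  rw [powCoords, dif_neg (by omega), if_neg (by omega)]

lemma monomialCoords_zero : monomialCoords n (0 : Fin m →₀ ℕ) = Finsupp.single (.inl ()) 1 :=
  if_pos rfl

lemma monomialCoords_single (j : Fin m) {k : ℕ} (hk : k ≠ 0) :
    monomialCoords n (Finsupp.single j k) = powCoords n j k := by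
  simp [monomialCoords, hk]

lemma monomialCoords_eq_zero_of_ne {μ : Fin m →₀ ℕ} {i j : Fin m} (hij : i ≠ j)
    (hi : μ i ≠ 0) (hj : μ j ≠ 0) : monomialCoords n μ = 0 := by
  have hcard : 1 < μ.support.card :=
    Finset.one_lt_card.mpr ⟨i, by simpa using hi, j, by simpa using hj, hij⟩
  rw [monomialCoords, if_neg (by rintro rfl; exact hi rfl), if_neg hcard.ne']

lemma monomialCoords_eq_zero_of_lt_degree {μ : Fin m →₀ ℕ} (hμ : 2 * n < μ.degree) :
    monomialCoords n μ = 0 := by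
  rcases eq_zero_or_eq_single_or_two_support μ with
    rfl | ⟨j, hj, hμj⟩ | ⟨i, j, hij, hi, hj⟩
  · simp at hμ
  · rw [hμj, Finsupp.degree_single] at hμ
    rw [hμj, monomialCoords_single j hj, powCoords_eq_zero hμ]
  · exact monomialCoords_eq_zero_of_ne hij hi hj

lemma coords_monomial (μ : Fin m →₀ ℕ) (c : ℤ) :
    coords m n (monomial μ c) = c • monomialCoords n μ := by
  rw [show monomial μ c = c • basisMonomials (Fin m) ℤ μ by simp [smul_monomial], map_smul,
    coords, Module.Basis.constr_basis]

lemma coords_monomial_mul_X_pow {μ : Fin m →₀ ℕ} (i : Fin m) {k : ℕ}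
    (h : 2 * n < μ.degree + k) :
    coords m n (monomial μ 1 * X i ^ k) = 0 := by
  rw [← monomial_add_single, coords_monomial, monomialCoords_eq_zero_of_lt_degree, smul_zero]
  rwa [map_add, Finsupp.degree_single]

lemma coords_monomial_mul_X_mul_X (μ : Fin m →₀ ℕ) {i j : Fin m} (hij : i ≠ j) :
    coords m n (monomial μ 1 * (X i * X j)) = 0 := by
  rw [← mul_assoc, ← pow_one (X i), ← pow_one (X j), ← monomial_add_single,
    ← monomial_add_single, coords_monomial,
    monomialCoords_eq_zero_of_ne hij (by simp) (by simp), smul_zero]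

lemma coords_monomial_mul_X_pow_sub_X_pow (hn : 1 ≤ n) (μ : Fin m →₀ ℕ) (i j : Fin m) :
    coords m n (monomial μ 1 * (X i ^ (2 * n) - X j ^ (2 * n))) = 0 := by
  rw [mul_sub, map_sub]
  rcases eq_or_ne μ 0 with rfl | hμ
  · rw [← one_def, one_mul, one_mul, X_pow_eq_monomial, X_pow_eq_monomial, coords_monomial,
      coords_monomial, monomialCoords_single _ (by omega), monomialCoords_single _ (by omega),
      powCoords_two_mul, powCoords_two_mul, sub_self]
  · have hdeg : 0 < μ.degree := Nat.pos_of_ne_zero ((Finsupp.degree_eq_zero_iff μ).not.mpr hμ)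
    rw [coords_monomial_mul_X_pow i (by omega), coords_monomial_mul_X_pow j (by omega), sub_zero]

lemma coords_eq_zero_of_mem (hn : 1 ≤ n) {p : MvPolynomial (Fin m) ℤ} (hp : p ∈ csIdeal m n) :
    coords m n p = 0 := by
  have hmonomials :
      Submodule.span ℤ (Set.range fun μ : Fin m →₀ ℕ => monomial μ (1 : ℤ)) = ⊤ := by
    simpa using (basisMonomials (Fin m) ℤ).span_eq
  rw [csIdeal, ← Submodule.restrictScalars_mem ℤ, Ideal.span,
    ← Submodule.span_smul_of_span_eq_top hmonomials] at hp
  refine (Submodule.span_le (p := LinearMap.ker (coords m n))).mpr ?_ hp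
  rintro _ ⟨_, ⟨μ, rfl⟩, g, hg, rfl⟩
  change coords m n (monomial μ 1 * g) = 0
  rcases hg with (⟨i, j, hij, rfl⟩ | ⟨i, j, -, rfl⟩) | ⟨j, rfl⟩
  · exact coords_monomial_mul_X_mul_X μ hij
  · exact coords_monomial_mul_X_pow_sub_X_pow hn μ i j
  · exact coords_monomial_mul_X_pow j (by omega)

lemma coords_basisPoly (hm : 1 ≤ m) (hn : 1 ≤ n) (i : Idx m n) :
    coords m n (basisPoly n hm i) = Finsupp.single i 1 := by
  rcases i with ⟨⟩ | ⟨j, k⟩ | ⟨⟩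
  · rw [basisPoly, one_def, coords_monomial, monomialCoords_zero, one_smul]
  · rw [basisPoly, X_pow_eq_monomial, coords_monomial, one_smul,
      monomialCoords_single j (Nat.succ_ne_zero _), powCoords, dif_pos (by omega)]
    rfl
  · rw [basisPoly, X_pow_eq_monomial, coords_monomial, one_smul,
      monomialCoords_single _ (by omega), powCoords_two_mul]

lemma linearIndependent_mk_basisPoly (hm : 1 ≤ m) (hn : 1 ≤ n) :
    LinearIndependent ℤ (Ideal.Quotient.mk (csIdeal m n) ∘ basisPoly n hm) := by
  let quotCoords := ((csIdeal m n).restrictScalars ℤ).liftQ (coords m n)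
      (fun p hp => coords_eq_zero_of_mem hn hp) ∘ₗ
    (Submodule.Quotient.restrictScalarsEquiv ℤ (csIdeal m n)).symm.toLinearMap
  refine LinearIndependent.of_comp quotCoords ?_
  have hcomp : quotCoords ∘ Ideal.Quotient.mk (csIdeal m n) ∘ basisPoly n hm =
      fun i => Finsupp.single i 1 :=
    _root_.funext (coords_basisPoly hm hn)
  rw [hcomp]
  exact Finsupp.linearIndependent_single_one ℤ (Idx m n)

end ConnectedSumCP

/-- `ℤ[x_1,…,x_m]/R_{2n}` is a free `ℤ`-module of rank `m(2n-1)+2`, with basis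
`{1} ∪ {x_j^k : 1 ≤ j ≤ m, 1 ≤ k ≤ 2n-1} ∪ {ω}`, where `ω` is the common image of
the `x_j^{2n}`. -/
theorem stmt_14 (m n : ℕ) (hm : 1 ≤ m) (hn : 1 ≤ n)
    (x : Fin m → (MvPolynomial (Fin m) ℤ ⧸ csIdeal m n))
    (hx : ∀ j, x j = Ideal.Quotient.mk _ (X j)) :
    ∃ B : Module.Basis (Unit ⊕ (Fin m × Fin (2 * n - 1)) ⊕ Unit) ℤ
        (MvPolynomial (Fin m) ℤ ⧸ csIdeal m n),
      B (Sum.inl ()) = 1 ∧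
      (∀ (j : Fin m) (k : Fin (2 * n - 1)),
        B (Sum.inr (Sum.inl (j, k))) = x j ^ ((k : ℕ) + 1)) ∧
      (∀ j : Fin m, B (Sum.inr (Sum.inr ())) = x j ^ (2 * n)) := by
  open ConnectedSumCP in
  refine ⟨.mk (linearIndependent_mk_basisPoly hm hn) (span_basisPoly_eq_top hm).ge,
    ?_, fun j k => ?_, fun j => ?_⟩ <;>
    simp only [Module.Basis.mk_apply, Function.comp_apply, basisPoly, hx, map_one, ← map_pow]
  exact mk_X_pow_two_mul _ _
end

section
/- Let n be even, m ≥ 1, and let K̃ be the free ℤ-module with basis B = {ω} ∪ {e_j^k : 1≤j≤m, 0≤k≤n-1} ∪ {f_j^k : 1≤j≤m, 0≤k≤n-2}. Define the 'conjugation' ℤ-linear map φ on K̃ by φ(ω) = 2ω, φ(e_j^k) = 2e_j^k - f_j^k for 0≤k≤n-2, φ(e_j^{n-1}) = ω, and φ(f_j^k) = 0. Then ker φ is a free ℤ-module with basis {f_j^k : 1≤j≤m, 0≤k≤n-2} ∪ {e_1^{n-1} - e_j^{n-1} : 2≤j≤m} ∪ {2e_1^{n-1} - ω}. -/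
open Finsupp

namespace Stmt19Aux

variable (m n : ℕ)

/-- ambient index type -/
abbrev J := Unit ⊕ (Fin m × Fin n) ⊕ (Fin m × Fin (n - 1))
/-- kernel basis index type -/
abbrev I := (Fin m × Fin (n - 1)) ⊕ Fin (m - 1) ⊕ Unit

/-- candidate kernel basis vectors -/
noncomputable def vv (hm : 1 ≤ m) (hn : 1 ≤ n) : I m n → (J m n →₀ ℤ)
  | Sum.inl (j, k) => single (Sum.inr (Sum.inr (j, k))) 1
  | Sum.inr (Sum.inl j') =>
      single (Sum.inr (Sum.inl ((⟨0, hm⟩ : Fin m), (⟨n - 1, Nat.sub_lt hn Nat.one_pos⟩ : Fin n)))) 1 -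
        single (Sum.inr (Sum.inl ((⟨(j' : ℕ) + 1, Nat.add_lt_of_lt_sub j'.isLt⟩ : Fin m),
          (⟨n - 1, Nat.sub_lt hn Nat.one_pos⟩ : Fin n)))) 1
  | Sum.inr (Sum.inr ()) =>
      2 • single (Sum.inr (Sum.inl ((⟨0, hm⟩ : Fin m), (⟨n - 1, Nat.sub_lt hn Nat.one_pos⟩ : Fin n)))) 1 -
        single (Sum.inl ()) 1

/-- retraction coefficients -/
noncomputable def uu : J m n → (I m n →₀ ℤ)
  | Sum.inl () => -single (Sum.inr (Sum.inr ())) 1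
  | Sum.inr (Sum.inl (j, k)) =>
      if (k : ℕ) = n - 1 then
        (if hj : (j : ℕ) = 0 then 0
         else -single (Sum.inr (Sum.inl ⟨(j : ℕ) - 1, by have := j.isLt; omega⟩)) 1)
      else 0
  | Sum.inr (Sum.inr (j, k)) => single (Sum.inl (j, k)) 1

/-- correction map coefficients -/
noncomputable def ww (hm : 1 ≤ m) (hn : 1 ≤ n) : J m n → (J m n →₀ ℤ)
  | Sum.inl () =>
      single (Sum.inr (Sum.inl ((⟨0, hm⟩ : Fin m), (⟨n - 1, Nat.sub_lt hn Nat.one_pos⟩ : Fin n)))) 1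
  | Sum.inr (Sum.inl _) => 0
  | Sum.inr (Sum.inr (j, k)) => -single (Sum.inr (Sum.inl (j, Fin.castLE (n.sub_le 1) k))) 1

theorem uu_ω : uu m n (Sum.inl ()) = -single (Sum.inr (Sum.inr ())) 1 := rfl

theorem uu_f (j : Fin m) (k : Fin (n - 1)) :
    uu m n (Sum.inr (Sum.inr (j, k))) = single (Sum.inl (j, k)) 1 := rfl

theorem uu_e (j : Fin m) (k : Fin n) (hk : (k : ℕ) ≠ n - 1) :
    uu m n (Sum.inr (Sum.inl (j, k))) = 0 := by
  simp only [uu]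
  rw [if_neg hk]

theorem uu_etop0 (h : n - 1 < n) (j : Fin m) (hj : (j : ℕ) = 0) :
    uu m n (Sum.inr (Sum.inl (j, ⟨n - 1, h⟩))) = 0 := by
  simp [uu, hj]

theorem uu_etopS (h : n - 1 < n) (j : Fin m) (hj : (j : ℕ) ≠ 0) :
    uu m n (Sum.inr (Sum.inl (j, ⟨n - 1, h⟩))) =
      -single (Sum.inr (Sum.inl ⟨(j : ℕ) - 1, by have := j.isLt; omega⟩)) 1 := by
  simp [uu, hj]

noncomputable def ψ (hm : 1 ≤ m) (hn : 1 ≤ n) : (I m n →₀ ℤ) →ₗ[ℤ] (J m n →₀ ℤ) :=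
  Finsupp.linearCombination ℤ (vv m n hm hn)

noncomputable def ρ : (J m n →₀ ℤ) →ₗ[ℤ] (I m n →₀ ℤ) :=
  Finsupp.linearCombination ℤ (uu m n)

noncomputable def θ (hm : 1 ≤ m) (hn : 1 ≤ n) : (J m n →₀ ℤ) →ₗ[ℤ] (J m n →₀ ℤ) :=
  Finsupp.linearCombination ℤ (ww m n hm hn)

end Stmt19Aux

open Stmt19Aux

/-- Abstract model of `ker(1+t)` on `K̃(m # ℂP^{2n})` for `n` even: let `K̃` be the
free `ℤ`-module on symbols `ω`, `e_j^k` (`1 ≤ j ≤ m`, `0 ≤ k ≤ n-1`) and `f_j^k`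
(`1 ≤ j ≤ m`, `0 ≤ k ≤ n-2`), and let `φ` be the `ℤ`-linear map with `φ(ω) = 2ω`,
`φ(f_j^k) = 0`, `φ(e_j^k) = 2e_j^k - f_j^k` for `k ≤ n-2` and `φ(e_j^{n-1}) = ω`.
Then `ker φ` is free with basis
`{f_j^k} ∪ {e_1^{n-1} - e_j^{n-1} : 2 ≤ j ≤ m} ∪ {2e_1^{n-1} - ω}`. -/
theorem stmt_19 (m n : ℕ) (hm : 1 ≤ m) (hn : 1 ≤ n) (hne : Even n)
    (ω : (Unit ⊕ (Fin m × Fin n) ⊕ (Fin m × Fin (n - 1))) →₀ ℤ)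
    (e : Fin m → Fin n → (Unit ⊕ (Fin m × Fin n) ⊕ (Fin m × Fin (n - 1))) →₀ ℤ)
    (f : Fin m → Fin (n - 1) → (Unit ⊕ (Fin m × Fin n) ⊕ (Fin m × Fin (n - 1))) →₀ ℤ)
    (hω : ω = Finsupp.single (Sum.inl ()) 1)
    (he : ∀ j k, e j k = Finsupp.single (Sum.inr (Sum.inl (j, k))) 1)
    (hf : ∀ j k, f j k = Finsupp.single (Sum.inr (Sum.inr (j, k))) 1)
    (φ : ((Unit ⊕ (Fin m × Fin n) ⊕ (Fin m × Fin (n - 1))) →₀ ℤ) →ₗ[ℤ]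
         ((Unit ⊕ (Fin m × Fin n) ⊕ (Fin m × Fin (n - 1))) →₀ ℤ))
    (hφω : φ ω = 2 • ω)
    (hφf : ∀ j k, φ (f j k) = 0)
    (hφe : ∀ (j : Fin m) (k : Fin (n - 1)),
      φ (e j (Fin.castLE (n.sub_le 1) k)) = 2 • e j (Fin.castLE (n.sub_le 1) k) - f j k)
    (hφetop : ∀ j : Fin m, φ (e j ⟨n - 1, by omega⟩) = ω) :
    ∃ B : Module.Basis ((Fin m × Fin (n - 1)) ⊕ Fin (m - 1) ⊕ Unit) ℤ (LinearMap.ker φ),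
      (∀ (j : Fin m) (k : Fin (n - 1)), (B (Sum.inl (j, k)) : _) = f j k) ∧
      (∀ j : Fin (m - 1), (B (Sum.inr (Sum.inl j)) : _) =
        e ⟨0, by omega⟩ ⟨n - 1, by omega⟩ -
          e ⟨(j : ℕ) + 1, by have := j.isLt; omega⟩ ⟨n - 1, by omega⟩) ∧
      ((B (Sum.inr (Sum.inr ())) : _) =
        2 • e ⟨0, by omega⟩ ⟨n - 1, by omega⟩ - ω) := by
  classical
  set Ψ := ψ m n hm hn with hΨ
  set P := ρ m n with hP
  set Θ := θ m n hm hn with hΘ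
  -- φ on singles
  have hφω' : φ (Finsupp.single (Sum.inl ()) 1) = 2 • Finsupp.single (Sum.inl ()) 1 := by
    rw [← hω]; exact hφω
  have hφf' : ∀ j k, φ (Finsupp.single (Sum.inr (Sum.inr (j, k))) 1) = 0 := by
    intro j k; rw [← hf]; exact hφf j k
  have hφetop' : ∀ (h : n - 1 < n) (j : Fin m),
      φ (Finsupp.single (Sum.inr (Sum.inl (j, (⟨n - 1, h⟩ : Fin n)))) 1) =
        Finsupp.single (Sum.inl ()) 1 := by
    intro h j
    rw [← hω]
    have := hφetop j
    rw [he] at this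
    exact this
  have hφe' : ∀ (j : Fin m) (k : Fin (n - 1)),
      φ (Finsupp.single
          (Sum.inr (Sum.inl (j, (⟨(k : ℕ), by have := k.isLt; omega⟩ : Fin n)))) 1) =
        2 • Finsupp.single
          (Sum.inr (Sum.inl (j, (⟨(k : ℕ), by have := k.isLt; omega⟩ : Fin n)))) 1 -
          Finsupp.single (Sum.inr (Sum.inr (j, k))) 1 := by
    intro j k
    have hcast : Fin.castLE (n.sub_le 1) k =
        (⟨(k : ℕ), by have := k.isLt; omega⟩ : Fin n) := Fin.ext rfl
    have := hφe j k
    rw [hcast, he, hf] at this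
    exact this
  -- key identity 1: P ∘ Ψ = id on singles
  have key1 : ∀ i, P (Ψ (Finsupp.single i 1)) = Finsupp.single i 1 := by
    intro i
    rw [hΨ, ψ, Finsupp.linearCombination_single, one_smul]
    rcases i with ⟨j, k⟩ | j' | ⟨⟩
    · simp [vv, hP, ρ, uu_f]
    · simp only [vv, map_sub, hP, ρ, Finsupp.linearCombination_single, one_smul]
      rw [uu_etop0 m n (by omega) ⟨0, by omega⟩ rfl,
        uu_etopS m n (by omega) ⟨(j' : ℕ) + 1, by have := j'.isLt; omega⟩ (by simp)]
      simp only [zero_sub, neg_neg]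
      congr 2
    · simp only [vv, map_sub, map_nsmul, hP, ρ, Finsupp.linearCombination_single, one_smul]
      rw [uu_etop0 m n (by omega) ⟨0, by omega⟩ rfl, uu_ω]
      simp
  -- key identity 2: φ ∘ Ψ = 0 on singles
  have key2 : ∀ i, φ (Ψ (Finsupp.single i 1)) = 0 := by
    intro i
    rw [hΨ, ψ, Finsupp.linearCombination_single, one_smul]
    rcases i with ⟨j, k⟩ | j' | ⟨⟩
    · simpa [vv] using hφf' j k
    · simp only [vv, map_sub]
      rw [hφetop' (by omega), hφetop' (by omega), sub_self]
    · simp only [vv, map_sub, map_nsmul]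
      rw [hφetop' (by omega), hφω']
      simp [two_smul]
  -- key identity 3: Ψ ∘ P + Θ ∘ φ = id
  have key3 : ∀ x, Ψ (P x) + Θ (φ x) = x := by
    have hlm : Ψ.comp P + Θ.comp φ = LinearMap.id := by
      apply Module.Basis.ext (Finsupp.basisSingleOne)
      intro a
      simp only [Finsupp.coe_basisSingleOne, LinearMap.add_apply, LinearMap.comp_apply,
        LinearMap.id_apply]
      rcases a with ⟨⟩ | ⟨j, k⟩ | ⟨j, k⟩
      · rw [hφω', hP, ρ, hΨ, hΘ, ψ, θ, Finsupp.linearCombination_single, one_smul, uu_ω,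
          map_neg, Finsupp.linearCombination_single, one_smul, map_nsmul,
          Finsupp.linearCombination_single, one_smul]
        simp only [vv, ww]
        abel
      · by_cases hk : (k : ℕ) = n - 1
        · have hktop : k = ⟨n - 1, Nat.sub_lt hn Nat.one_pos⟩ := Fin.ext hk
          subst hktop
          rw [hφetop' (by omega)]
          simp only [hP, ρ, hΨ, hΘ, ψ, θ, Finsupp.linearCombination_single, one_smul]
          by_cases hj : (j : ℕ) = 0
          · rw [uu_etop0 m n (by omega) j hj, map_zero, zero_add]
            have hj0 : j = ⟨0, hm⟩ := Fin.ext hj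
            subst hj0
            rfl
          · rw [uu_etopS m n (by omega) j hj]
            simp only [map_neg, Finsupp.linearCombination_single, one_smul, vv, ww, map_nsmul]
            have hjj : (⟨((⟨(j : ℕ) - 1, by have := j.isLt; omega⟩ : Fin (m - 1)) : ℕ) + 1,
                by have := j.isLt; omega⟩ : Fin m) = j := by
              apply Fin.ext
              show (j : ℕ) - 1 + 1 = j
              omega
            rw [hjj]
            abel
        · have hk2 : (k : ℕ) < n - 1 := by have := k.isLt; omega
          have h5 := hφe' j ⟨(k : ℕ), hk2⟩
          have hkk : (⟨((⟨(k : ℕ), hk2⟩ : Fin (n - 1)) : ℕ), by have := k.isLt; omega⟩ : Fin n)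
              = k := Fin.ext rfl
          rw [hkk] at h5
          rw [h5]
          rw [hP, ρ, Finsupp.linearCombination_single, one_smul, uu_e m n j k hk]
          simp only [hΨ, hΘ, θ, map_sub, map_nsmul, Finsupp.linearCombination_single, one_smul,
            map_zero, smul_zero, zero_add, ww]
          have hcast : Fin.castLE (n.sub_le 1) (⟨(k : ℕ), hk2⟩ : Fin (n - 1)) = k :=
            Fin.ext rfl
          rw [hcast]
          simp
      · rw [hφf']
        simp only [hP, ρ, hΨ, hΘ, Finsupp.linearCombination_single, one_smul, map_zero, add_zero,
          uu_f, ψ]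
        rfl
    intro x
    exact LinearMap.congr_fun hlm x
  -- build the equivalence onto ker φ
  have hmem : ∀ x, Ψ x ∈ LinearMap.ker φ := by
    intro x
    induction x using Finsupp.induction_linear with
    | zero => simp
    | add a b ha hb => rw [map_add]; exact add_mem ha hb
    | single a b =>
      have hab : Finsupp.single a b = b • Finsupp.single a (1 : ℤ) := by
        rw [Finsupp.smul_single, smul_eq_mul, mul_one]
      rw [hab, map_smul, LinearMap.mem_ker, map_smul, key2, smul_zero]
  let Ψ' : ((Fin m × Fin (n - 1)) ⊕ Fin (m - 1) ⊕ Unit →₀ ℤ) →ₗ[ℤ] LinearMap.ker φ :=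
    Ψ.codRestrict (LinearMap.ker φ) hmem
  have hinj : Function.Injective Ψ' := by
    intro x y hxy
    have h1 : Ψ x = Ψ y := congrArg Subtype.val hxy
    have hPsi : ∀ z, P (Ψ z) = z := by
      intro z
      induction z using Finsupp.induction_linear with
      | zero => simp
      | add a b ha hb => rw [map_add, map_add, ha, hb]
      | single a b =>
        have hab : Finsupp.single a b = b • Finsupp.single a (1 : ℤ) := by
          rw [Finsupp.smul_single, smul_eq_mul, mul_one]
        rw [hab, map_smul, map_smul, key1]
    calc x = P (Ψ x) := (hPsi x).symm
    _ = P (Ψ y) := by rw [h1]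
    _ = y := hPsi y
  have hsurj : Function.Surjective Ψ' := by
    rintro ⟨y, hy⟩
    refine ⟨P y, Subtype.ext ?_⟩
    have h3 := key3 y
    rw [LinearMap.mem_ker.mp hy, map_zero, add_zero] at h3
    exact h3
  let E : ((Fin m × Fin (n - 1)) ⊕ Fin (m - 1) ⊕ Unit →₀ ℤ) ≃ₗ[ℤ] LinearMap.ker φ :=
    LinearEquiv.ofBijective Ψ' ⟨hinj, hsurj⟩
  have hB : ∀ i, (((Finsupp.basisSingleOne.map E) i : LinearMap.ker φ) : _) =
      vv m n hm hn i := by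
    intro i
    rw [Module.Basis.map_apply]
    simp only [Finsupp.coe_basisSingleOne]
    show (Ψ (Finsupp.single i 1) : _) = vv m n hm hn i
    rw [hΨ, ψ, Finsupp.linearCombination_single, one_smul]
  refine ⟨(Finsupp.basisSingleOne).map E, ?_, ?_, ?_⟩
  · intro j k
    rw [hB, hf]
    rfl
  · intro j'
    rw [hB, he, he]
    rfl
  · rw [hB, he, hω]
    rfl
end
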